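/- Let A be a real M×N matrix such that AA* is invertible. Suppose y = Ax + e where x ∈ ℝ^N is s-sparse and e ∈ ℝ^M, with k ≥ s. Let μ ∈ ℝ^N be (k−1)-sparse, set z = μ + A*(AA*)⁻¹(y − Aμ), let T_k be an index set of k largest absolute entries of z (|T_k| = k and every entry of z indexed by T_k has absolute value at least that of every entry indexed outside T_k), and let v = z_{T_k}. Then ‖x − v‖₂ ≤ 2√2 · γ_{2k+s−1}(A) · ‖x − μ‖₂ + (√(2+2θ_{k+s}(A)) + √(1+θ_k(A))) · ‖e‖₂. -/

import Mathlib

open Matrix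

/-- The Euclidean (ℓ²) norm of a vector in ℝⁿ. -/
noncomputable def norm2 {n : ℕ} (x : Fin n → ℝ) : ℝ := Real.sqrt (∑ i, x i ^ 2)

/-- `x` is `s`-sparse: it has at most `s` nonzero entries. -/
def sparse {n : ℕ} (s : ℕ) (x : Fin n → ℝ) : Prop :=
  (Finset.univ.filter fun i => x i ≠ 0).card ≤ s

/-- `restrict T x` is the vector agreeing with `x` on `T` and zero outside `T`. -/
def restrict {n : ℕ} (T : Finset (Fin n)) (x : Fin n → ℝ) : Fin n → ℝ :=
  fun i => if i ∈ T then x i else 0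

/-- The preconditioned matrix `(AAᴴ)^{-1/2} A`, where `(AAᴴ)^{-1/2}` is the inverse of the
positive semidefinite square root of `AAᴴ`. -/
noncomputable def precond {M N : ℕ} (A : Matrix (Fin M) (Fin N) ℝ) :
    Matrix (Fin M) (Fin N) ℝ :=
  ((Matrix.posSemidef_self_mul_conjTranspose A).1.eigenvectorUnitary.1 *
      diagonal ((↑) ∘ (√·) ∘ (Matrix.posSemidef_self_mul_conjTranspose A).1.eigenvalues) *
      (star (Matrix.posSemidef_self_mul_conjTranspose A).1.eigenvectorUnitary :
        Matrix (Fin M) (Fin M) ℝ))⁻¹ * A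

/-- The preconditioned restricted isometry constant `γ_s(A)`: the smallest `γ ≥ 0` such that
`(1-γ)‖x‖₂² ≤ ‖(AAᴴ)^{-1/2}Ax‖₂²` for all `s`-sparse `x`. -/
noncomputable def pripConst {M N : ℕ} (A : Matrix (Fin M) (Fin N) ℝ) (s : ℕ) : ℝ :=
  sInf {γ : ℝ | 0 ≤ γ ∧ ∀ x : Fin N → ℝ, sparse s x →
    (1 - γ) * norm2 x ^ 2 ≤ norm2 ((precond A).mulVec x) ^ 2}

/-- The restricted isometry constant `δ_s(B)`: the smallest `δ ≥ 0` such that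
`(1-δ)‖x‖₂² ≤ ‖Bx‖₂² ≤ (1+δ)‖x‖₂²` for all `s`-sparse `x`. -/
noncomputable def ripConst {m n : ℕ} (B : Matrix (Fin m) (Fin n) ℝ) (s : ℕ) : ℝ :=
  sInf {δ : ℝ | 0 ≤ δ ∧ ∀ x : Fin n → ℝ, sparse s x →
    (1 - δ) * norm2 x ^ 2 ≤ norm2 (B.mulVec x) ^ 2 ∧
      norm2 (B.mulVec x) ^ 2 ≤ (1 + δ) * norm2 x ^ 2}

/-- `θ_t(A) = δ_t((AAᴴ)⁻¹A)`. -/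
noncomputable def thetaConst {M N : ℕ} (A : Matrix (Fin M) (Fin N) ℝ) (t : ℕ) : ℝ :=
  ripConst ((A * Aᴴ)⁻¹ * A) t

/-! With `w = x - μ`, `A⁺ = Aᴴ(AAᴴ)⁻¹` and `P = A⁺A`, the error of the estimate is
`z - x = A⁺e - (I - P)w`. Since `(precond A)ᵀ (precond A) = P`, the preconditioned RIP says that
`I - P` shrinks `t`-sparse vectors by the factor `√γ_t`; as `I - P` is an orthogonal projection,
this bounds every restriction of `(I - P)w` to a small set by `γ_t ‖w‖`, while `θ` bounds the
restrictions of `A⁺e` by duality. On `T_k` this controls `x - v` directly. Off `T_k`, `x` lives on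
`S \ T_k` (`S` its support); there `z` is dominated by its entries on `T_k \ S`, where `z` equals
the error, so the missed part of `x` is at most `√2` times the error on `S ∆ T_k`. -/

open scoped symmDiff

lemma le_of_sq_le_mul {a b : ℝ} (hb : 0 ≤ b) (h : a ^ 2 ≤ a * b) : a ≤ b := by
  nlinarith

lemma le_sqrt_mul_of_sq_le {a b c : ℝ} (hb : 0 ≤ b) (h : a ^ 2 ≤ c * b ^ 2) : a ≤ √c * b :=
  calc a ≤ √(a ^ 2) := by rw [Real.sqrt_sq_eq_abs]; exact le_abs_self a
    _ ≤ √(c * b ^ 2) := Real.sqrt_le_sqrt h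
    _ = √c * b := by rw [Real.sqrt_mul' c (sq_nonneg b), Real.sqrt_sq hb]

lemma add_le_sqrt_two_mul {a b c : ℝ} (hc : 0 ≤ c) (h : c ^ 2 = a ^ 2 + b ^ 2) :
    a + b ≤ √2 * c :=
  le_sqrt_mul_of_sq_le hc (h ▸ add_sq_le)

lemma sInf_mem_of_isClosed {ι : Type*} (p : ι → Prop) (Q : ι → ℝ → Prop)
    (hQ : ∀ i, IsClosed {δ | Q i δ}) (hne : ∃ δ, 0 ≤ δ ∧ ∀ i, p i → Q i δ) :
    sInf {δ | 0 ≤ δ ∧ ∀ i, p i → Q i δ} ∈ {δ | 0 ≤ δ ∧ ∀ i, p i → Q i δ} := by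
  have hclosed : IsClosed {δ : ℝ | 0 ≤ δ ∧ ∀ i, p i → Q i δ} := by
    have : {δ : ℝ | 0 ≤ δ ∧ ∀ i, p i → Q i δ} = Set.Ici 0 ∩ ⋂ i, ⋂ (_ : p i), {δ | Q i δ} := by
      ext; simp
    rw [this]
    exact isClosed_Ici.inter (isClosed_iInter fun i => isClosed_iInter fun _ => hQ i)
  exact hclosed.csInf_mem hne ⟨0, fun _ hδ => hδ.1⟩

theorem Finset.sum_le_sum_of_card_le {ι R : Type*} [AddCommMonoid R] [LinearOrder R]
    [IsOrderedAddMonoid R] {I J : Finset ι} {f : ι → R} (hf : ∀ j ∈ J, 0 ≤ f j)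
    (hcard : I.card ≤ J.card) (hle : ∀ i ∈ I, ∀ j ∈ J, f i ≤ f j) :
    ∑ i ∈ I, f i ≤ ∑ j ∈ J, f j := by
  rcases J.eq_empty_or_nonempty with rfl | hJ
  · simp [Finset.card_eq_zero.mp (Nat.le_zero.mp hcard)]
  obtain ⟨j₀, hj₀, hmin⟩ := J.exists_min_image f hJ
  calc ∑ i ∈ I, f i ≤ I.card • f j₀ := Finset.sum_le_card_nsmul _ _ _ fun i hi => hle i hi j₀ hj₀
    _ ≤ J.card • f j₀ := nsmul_le_nsmul_left (hf j₀ hj₀) hcard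
    _ ≤ ∑ j ∈ J, f j := Finset.card_nsmul_le_sum _ _ _ hmin

theorem Matrix.dotProduct_mulVec_of_symm_idem {ι R : Type*} [Fintype ι] [CommSemiring R]
    {Q : Matrix ι ι R} (hsymm : Qᵀ = Q) (hidem : Q * Q = Q) (u w : ι → R) :
    u ⬝ᵥ Q *ᵥ w = (Q *ᵥ u) ⬝ᵥ (Q *ᵥ w) := by
  conv_lhs => rw [← hidem, ← mulVec_mulVec, dotProduct_mulVec, ← mulVec_transpose, hsymm]

section Vectors

variable {n : ℕ}

lemma norm2_eq_norm (x : Fin n → ℝ) :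
    norm2 x = ‖(WithLp.toLp 2 x : EuclideanSpace ℝ (Fin n))‖ := by
  simp [norm2, EuclideanSpace.norm_eq]

lemma norm2_nonneg (x : Fin n → ℝ) : 0 ≤ norm2 x := Real.sqrt_nonneg _

lemma sq_norm2 (x : Fin n → ℝ) : norm2 x ^ 2 = x ⬝ᵥ x := by
  rw [norm2, Real.sq_sqrt (Finset.sum_nonneg fun i _ => sq_nonneg _), dotProduct]
  simp only [sq]

lemma norm2_sub_le (x y : Fin n → ℝ) : norm2 (x - y) ≤ norm2 x + norm2 y := by
  simpa only [norm2_eq_norm, WithLp.toLp_sub] using norm_sub_le _ _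

lemma dotProduct_le_norm2_mul_norm2 (x y : Fin n → ℝ) : x ⬝ᵥ y ≤ norm2 x * norm2 y := by
  have := real_inner_le_norm (WithLp.toLp 2 x : EuclideanSpace ℝ (Fin n)) (WithLp.toLp 2 y)
  rwa [EuclideanSpace.inner_toLp_toLp, star_trivial, dotProduct_comm, ← norm2_eq_norm,
    ← norm2_eq_norm] at this

lemma sq_norm2_mulVec_le {m : ℕ} (B : Matrix (Fin m) (Fin n) ℝ) (x : Fin n → ℝ) :
    norm2 (B *ᵥ x) ^ 2 ≤ (∑ i, ∑ j, B i j ^ 2) * norm2 x ^ 2 := by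
  rw [norm2, norm2, Real.sq_sqrt (Finset.sum_nonneg fun i _ => sq_nonneg _),
    Real.sq_sqrt (Finset.sum_nonneg fun i _ => sq_nonneg _), Finset.sum_mul]
  exact Finset.sum_le_sum fun i _ => Finset.sum_mul_sq_le_sq_mul_sq Finset.univ (B i) x

lemma sparse.mono {s t : ℕ} {x : Fin n → ℝ} (hx : sparse s x) (hst : s ≤ t) : sparse t x :=
  hx.trans hst

lemma sparse.sub {s t : ℕ} {x y : Fin n → ℝ} (hx : sparse s x) (hy : sparse t y) :
    sparse (s + t) (x - y) := by
  refine (Finset.card_le_card fun i hi => ?_).trans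
    ((Finset.card_union_le _ _).trans (add_le_add hx hy))
  simp only [Finset.mem_filter, Finset.mem_univ, true_and, Finset.mem_union, Pi.sub_apply] at hi ⊢
  by_contra h
  push Not at h
  simp [h.1, h.2] at hi

lemma sparse_restrict {t : ℕ} {T : Finset (Fin n)} (hT : T.card ≤ t) (x : Fin n → ℝ) :
    sparse t (restrict T x) := by
  refine (Finset.card_le_card fun i hi => ?_).trans hT
  by_contra h
  simp [restrict, h] at hi

lemma sub_restrict (T : Finset (Fin n)) (x z : Fin n → ℝ) :
    x - restrict T z = restrict Tᶜ x - restrict T (z - x) := by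
  ext i
  by_cases hi : i ∈ T <;> simp [restrict, hi]

lemma sq_norm2_restrict (T : Finset (Fin n)) (x : Fin n → ℝ) :
    norm2 (restrict T x) ^ 2 = ∑ i ∈ T, x i ^ 2 := by
  rw [norm2, Real.sq_sqrt (Finset.sum_nonneg fun i _ => sq_nonneg _)]
  simp [restrict, ite_pow, Finset.sum_ite_mem]

lemma dotProduct_restrict_self (T : Finset (Fin n)) (x : Fin n → ℝ) :
    restrict T x ⬝ᵥ x = norm2 (restrict T x) ^ 2 := by
  rw [sq_norm2, dotProduct, dotProduct]
  refine Finset.sum_congr rfl fun i _ => ?_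
  by_cases hi : i ∈ T <;> simp [restrict, hi]

lemma sq_norm2_restrict_union {I J : Finset (Fin n)} (h : Disjoint I J) (x : Fin n → ℝ) :
    norm2 (restrict (I ∪ J) x) ^ 2 = norm2 (restrict I x) ^ 2 + norm2 (restrict J x) ^ 2 := by
  simp only [sq_norm2_restrict, Finset.sum_union h]

lemma norm2_restrict_le_of_card_le {I J : Finset (Fin n)} {z : Fin n → ℝ}
    (hcard : I.card ≤ J.card) (hle : ∀ i ∈ I, ∀ j ∈ J, |z i| ≤ |z j|) :
    norm2 (restrict I z) ≤ norm2 (restrict J z) := by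
  refine (pow_le_pow_iff_left₀ (norm2_nonneg _) (norm2_nonneg _) two_ne_zero).mp ?_
  rw [sq_norm2_restrict, sq_norm2_restrict]
  exact Finset.sum_le_sum_of_card_le (fun j _ => sq_nonneg _) hcard
    fun i hi j hj => sq_le_sq.mpr (hle i hi j hj)

/-- Hard thresholding: on `T \ S` the vector `z` coincides with the error `z - x`, and it dominates
`z` on `S \ T`. -/
lemma norm2_restrict_compl_le {x z : Fin n → ℝ} {S T : Finset (Fin n)}
    (hS : ∀ i ∉ S, x i = 0) (hST : S.card ≤ T.card) (hT : ∀ i ∈ T, ∀ j ∉ T, |z j| ≤ |z i|) :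
    norm2 (restrict Tᶜ x) ≤ √2 * norm2 (restrict (S ∆ T) (z - x)) := by
  have hx : restrict Tᶜ x = restrict (S \ T) z - restrict (S \ T) (z - x) := by
    ext i
    by_cases hiT : i ∈ T <;> by_cases hiS : i ∈ S <;> simp [restrict, hiT, hiS, hS]
  have hz : restrict (T \ S) z = restrict (T \ S) (z - x) := by
    ext i
    by_cases hiT : i ∈ T <;> by_cases hiS : i ∈ S <;> simp [restrict, hiT, hiS, hS]
  have hthreshold : norm2 (restrict (S \ T) z) ≤ norm2 (restrict (T \ S) z) :=
    norm2_restrict_le_of_card_le (Finset.card_sdiff_le_card_sdiff_iff.mpr hST)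
      fun i hi j hj => hT j (Finset.mem_sdiff.mp hj).1 i (Finset.mem_sdiff.mp hi).2
  calc norm2 (restrict Tᶜ x)
      ≤ norm2 (restrict (S \ T) z) + norm2 (restrict (S \ T) (z - x)) := hx ▸ norm2_sub_le _ _
    _ ≤ norm2 (restrict (S \ T) (z - x)) + norm2 (restrict (T \ S) (z - x)) := by
      rw [← hz]; linarith
    _ ≤ √2 * norm2 (restrict (S ∆ T) (z - x)) :=
      add_le_sqrt_two_mul (norm2_nonneg _) (sq_norm2_restrict_union disjoint_sdiff_sdiff _)

lemma ripConst_spec {m : ℕ} (B : Matrix (Fin m) (Fin n) ℝ) (s : ℕ) :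
    0 ≤ ripConst B s ∧ ∀ x : Fin n → ℝ, sparse s x →
      (1 - ripConst B s) * norm2 x ^ 2 ≤ norm2 (B *ᵥ x) ^ 2 ∧
        norm2 (B *ᵥ x) ^ 2 ≤ (1 + ripConst B s) * norm2 x ^ 2 := by
  have hF : 0 ≤ ∑ i, ∑ j, B i j ^ 2 := by positivity
  refine sInf_mem_of_isClosed (sparse s) (fun x δ => (1 - δ) * norm2 x ^ 2 ≤ norm2 (B *ᵥ x) ^ 2 ∧
      norm2 (B *ᵥ x) ^ 2 ≤ (1 + δ) * norm2 x ^ 2)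
    (fun _ => by
      rw [Set.ofPred_and]
      exact (isClosed_le (by fun_prop) continuous_const).inter
        (isClosed_le continuous_const (by fun_prop)))
    ⟨1 + ∑ i, ∑ j, B i j ^ 2, by positivity, fun x _ => ⟨?_, ?_⟩⟩
  · nlinarith [sq_nonneg (norm2 (B *ᵥ x)), sq_nonneg (norm2 x)]
  · nlinarith [sq_norm2_mulVec_le B x, sq_nonneg (norm2 x)]

end Vectors

section Preconditioning

variable {M N : ℕ} (A : Matrix (Fin M) (Fin N) ℝ)

noncomputable def pinv : Matrix (Fin N) (Fin M) ℝ := Aᴴ * (A * Aᴴ)⁻¹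

noncomputable def rowSpaceProj : Matrix (Fin N) (Fin N) ℝ := pinv A * A

lemma transpose_pinv : (pinv A)ᵀ = (A * Aᴴ)⁻¹ * A := by
  have hsymm : (A * Aᴴ)ᵀ = A * Aᴴ := by
    rw [conjTranspose_eq_transpose_of_trivial, transpose_mul, transpose_transpose]
  rw [pinv, transpose_mul, transpose_nonsing_inv, hsymm, conjTranspose_eq_transpose_of_trivial,
    transpose_transpose]

lemma transpose_rowSpaceProj : (rowSpaceProj A)ᵀ = rowSpaceProj A := by
  rw [rowSpaceProj, transpose_mul, transpose_pinv, pinv, conjTranspose_eq_transpose_of_trivial,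
    Matrix.mul_assoc]

lemma rowSpaceProj_mul_self (hA : IsUnit (A * Aᴴ).det) :
    rowSpaceProj A * rowSpaceProj A = rowSpaceProj A := by
  simp only [rowSpaceProj, pinv, Matrix.mul_assoc]
  rw [← Matrix.mul_assoc A, ← Matrix.mul_assoc (A * Aᴴ)⁻¹, nonsing_inv_mul _ hA, Matrix.one_mul]

lemma transpose_precond_mul_precond : (precond A)ᵀ * precond A = rowSpaceProj A := by
  have hH := (Matrix.posSemidef_self_mul_conjTranspose A).1
  set U : Matrix (Fin M) (Fin M) ℝ := hH.eigenvectorUnitary.1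
  set D : Matrix (Fin M) (Fin M) ℝ := diagonal ((↑) ∘ (√·) ∘ hH.eigenvalues) with hD
  have hUU : star U * U = 1 := Unitary.coe_star_mul_self _
  have hsymm : (U * D * star U)ᵀ = U * D * star U := by
    rw [star_eq_conjTranspose, conjTranspose_eq_transpose_of_trivial, transpose_mul,
      transpose_mul, transpose_transpose, hD, diagonal_transpose, Matrix.mul_assoc]
  have hDD : D * D = diagonal (RCLike.ofReal ∘ hH.eigenvalues) := by
    rw [hD, diagonal_mul_diagonal]
    congr 1; ext i
    exact Real.mul_self_sqrt ((Matrix.posSemidef_self_mul_conjTranspose A).eigenvalues_nonneg i)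
  have hsq : U * D * star U * (U * D * star U) = A * Aᴴ := by
    calc U * D * star U * (U * D * star U) = U * (D * (star U * U) * D) * star U := by
          simp only [Matrix.mul_assoc]
      _ = A * Aᴴ := by
          rw [hUU, Matrix.mul_one, hDD]
          conv_rhs => rw [hH.spectral_theorem, Unitary.conjStarAlgAut_apply]
  change ((U * D * star U)⁻¹ * A)ᵀ * ((U * D * star U)⁻¹ * A) = rowSpaceProj A
  rw [transpose_mul, transpose_nonsing_inv, hsymm, rowSpaceProj, pinv, Matrix.mul_assoc,
    ← Matrix.mul_assoc _ _ A, ← Matrix.mul_inv_rev, hsq, ← Matrix.mul_assoc,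
    conjTranspose_eq_transpose_of_trivial]

lemma dotProduct_rowSpaceProj_mulVec (u w : Fin N → ℝ) :
    u ⬝ᵥ rowSpaceProj A *ᵥ w = (precond A *ᵥ u) ⬝ᵥ (precond A *ᵥ w) := by
  rw [← transpose_precond_mul_precond, ← mulVec_mulVec, dotProduct_mulVec, vecMul_transpose]

lemma dotProduct_sub_rowSpaceProj_mulVec (hA : IsUnit (A * Aᴴ).det) (u w : Fin N → ℝ) :
    u ⬝ᵥ (w - rowSpaceProj A *ᵥ w) =
      (u - rowSpaceProj A *ᵥ u) ⬝ᵥ (w - rowSpaceProj A *ᵥ w) := by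
  have hsymm : (1 - rowSpaceProj A)ᵀ = 1 - rowSpaceProj A := by
    rw [transpose_sub, transpose_one, transpose_rowSpaceProj]
  have hidem : (1 - rowSpaceProj A) * (1 - rowSpaceProj A) = 1 - rowSpaceProj A := by
    rw [Matrix.sub_mul, Matrix.mul_sub, Matrix.mul_sub, rowSpaceProj_mul_self A hA]
    simp
  simpa only [sub_mulVec, one_mulVec] using dotProduct_mulVec_of_symm_idem hsymm hidem u w

lemma sq_norm2_sub_rowSpaceProj_mulVec (hA : IsUnit (A * Aᴴ).det) (v : Fin N → ℝ) :
    norm2 (v - rowSpaceProj A *ᵥ v) ^ 2 = norm2 v ^ 2 - norm2 (precond A *ᵥ v) ^ 2 := by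
  rw [sq_norm2, sq_norm2, sq_norm2, ← dotProduct_sub_rowSpaceProj_mulVec A hA, dotProduct_sub,
    dotProduct_rowSpaceProj_mulVec]

lemma pripConst_spec (s : ℕ) : 0 ≤ pripConst A s ∧ ∀ x : Fin N → ℝ, sparse s x →
    (1 - pripConst A s) * norm2 x ^ 2 ≤ norm2 (precond A *ᵥ x) ^ 2 :=
  sInf_mem_of_isClosed (sparse s) (fun x γ => (1 - γ) * norm2 x ^ 2 ≤ norm2 (precond A *ᵥ x) ^ 2)
    (fun _ => isClosed_le (by fun_prop) continuous_const)
    ⟨1, zero_le_one, fun x _ => by simpa using sq_nonneg (norm2 (precond A *ᵥ x))⟩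

lemma norm2_sub_rowSpaceProj_mulVec_le (hA : IsUnit (A * Aᴴ).det) {t : ℕ} {v : Fin N → ℝ}
    (hv : sparse t v) : norm2 (v - rowSpaceProj A *ᵥ v) ≤ √(pripConst A t) * norm2 v := by
  refine le_sqrt_mul_of_sq_le (norm2_nonneg v) ?_
  rw [sq_norm2_sub_rowSpaceProj_mulVec A hA]
  linarith [(pripConst_spec A t).2 v hv]

/-- `‖u‖² = ⟪u, (I - P)w⟫ = ⟪(I - P)u, (I - P)w⟫` for `u = ((I - P)w)_T`, and `I - P` shrinks both
sparse vectors `u` and `w` by the factor `√γ`. -/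
lemma norm2_restrict_sub_rowSpaceProj_mulVec_le (hA : IsUnit (A * Aᴴ).det) {t : ℕ}
    {T : Finset (Fin N)} (hT : T.card ≤ t) {w : Fin N → ℝ} (hw : sparse t w) :
    norm2 (restrict T (w - rowSpaceProj A *ᵥ w)) ≤ pripConst A t * norm2 w := by
  set u := restrict T (w - rowSpaceProj A *ᵥ w)
  have hγ := (pripConst_spec A t).1
  refine le_of_sq_le_mul (by positivity [norm2_nonneg w]) ?_
  calc norm2 u ^ 2 = u ⬝ᵥ (w - rowSpaceProj A *ᵥ w) := (dotProduct_restrict_self T _).symm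
    _ = (u - rowSpaceProj A *ᵥ u) ⬝ᵥ (w - rowSpaceProj A *ᵥ w) :=
      dotProduct_sub_rowSpaceProj_mulVec A hA u w
    _ ≤ norm2 (u - rowSpaceProj A *ᵥ u) * norm2 (w - rowSpaceProj A *ᵥ w) :=
      dotProduct_le_norm2_mul_norm2 _ _
    _ ≤ (√(pripConst A t) * norm2 u) * (√(pripConst A t) * norm2 w) :=
      mul_le_mul (norm2_sub_rowSpaceProj_mulVec_le A hA (sparse_restrict hT _))
        (norm2_sub_rowSpaceProj_mulVec_le A hA hw) (norm2_nonneg _)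
        (by positivity [norm2_nonneg u])
    _ = norm2 u * (pripConst A t * norm2 w) := by
      rw [mul_mul_mul_comm, Real.mul_self_sqrt hγ]; ring

lemma norm2_restrict_pinv_mulVec_le {t : ℕ} {T : Finset (Fin N)} (hT : T.card ≤ t)
    (e : Fin M → ℝ) :
    norm2 (restrict T (pinv A *ᵥ e)) ≤ √(1 + thetaConst A t) * norm2 e := by
  set u := restrict T (pinv A *ᵥ e)
  have hθ := (ripConst_spec ((A * Aᴴ)⁻¹ * A) t).2 u (sparse_restrict hT _)
  have hCu : norm2 (((A * Aᴴ)⁻¹ * A) *ᵥ u) ≤ √(1 + thetaConst A t) * norm2 u :=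
    le_sqrt_mul_of_sq_le (norm2_nonneg u) hθ.2
  refine le_of_sq_le_mul (by positivity [norm2_nonneg e]) ?_
  calc norm2 u ^ 2 = u ⬝ᵥ pinv A *ᵥ e := (dotProduct_restrict_self T _).symm
    _ = (((A * Aᴴ)⁻¹ * A) *ᵥ u) ⬝ᵥ e := by
      rw [dotProduct_mulVec, ← transpose_pinv, mulVec_transpose]
    _ ≤ norm2 (((A * Aᴴ)⁻¹ * A) *ᵥ u) * norm2 e := dotProduct_le_norm2_mul_norm2 _ _
    _ ≤ √(1 + thetaConst A t) * norm2 u * norm2 e := by gcongr; exact norm2_nonneg e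
    _ = norm2 u * (√(1 + thetaConst A t) * norm2 e) := by ring

lemma norm2_restrict_pinv_mulVec_sub_le (hA : IsUnit (A * Aᴴ).det) {t t' : ℕ}
    {T : Finset (Fin N)} (hT : T.card ≤ t) (hT' : T.card ≤ t') {w : Fin N → ℝ}
    (hw : sparse t w) (e : Fin M → ℝ) :
    norm2 (restrict T (pinv A *ᵥ e - (w - rowSpaceProj A *ᵥ w))) ≤
      pripConst A t * norm2 w + √(1 + thetaConst A t') * norm2 e := by
  have hsplit : restrict T (pinv A *ᵥ e - (w - rowSpaceProj A *ᵥ w)) =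
      restrict T (pinv A *ᵥ e) - restrict T (w - rowSpaceProj A *ᵥ w) := by
    ext i; by_cases hi : i ∈ T <;> simp [restrict, hi]
  rw [hsplit, add_comm]
  exact (norm2_sub_le _ _).trans (add_le_add (norm2_restrict_pinv_mulVec_le A hT' e)
    (norm2_restrict_sub_rowSpaceProj_mulVec_le A hA hT hw))

lemma add_pinv_mulVec_sub_eq (x μ : Fin N → ℝ) (e : Fin M → ℝ) :
    μ + pinv A *ᵥ (A *ᵥ x + e - A *ᵥ μ) - x =
      pinv A *ᵥ e - ((x - μ) - rowSpaceProj A *ᵥ (x - μ)) := by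
  simp only [rowSpaceProj, ← mulVec_mulVec, mulVec_add, mulVec_sub]
  abel

end Preconditioning

theorem stmt8 {M N : ℕ} (A : Matrix (Fin M) (Fin N) ℝ) (hA : IsUnit (A * Aᴴ).det)
    (s k : ℕ) (hks : k ≥ s)
    (x : Fin N → ℝ) (hx : sparse s x) (e : Fin M → ℝ) (y : Fin M → ℝ)
    (hy : y = A.mulVec x + e)
    (μ : Fin N → ℝ) (hμ : sparse (k - 1) μ)
    (z : Fin N → ℝ)
    (hz : z = μ + (Aᴴ * (A * Aᴴ)⁻¹).mulVec (y - A.mulVec μ))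
    (Tk : Finset (Fin N)) (hTcard : Tk.card = k)
    (hTbig : ∀ i ∈ Tk, ∀ j ∉ Tk, |z j| ≤ |z i|)
    (v : Fin N → ℝ) (hv : v = restrict Tk z) :
    norm2 (x - v) ≤
      2 * Real.sqrt 2 * pripConst A (2 * k + s - 1) * norm2 (x - μ) +
      (Real.sqrt (2 + 2 * thetaConst A (k + s)) + Real.sqrt (1 + thetaConst A k)) *
        norm2 e := by
  set S := Finset.univ.filter fun i => x i ≠ 0
  have hS : S.card ≤ s := hx
  have hU : (S ∆ Tk).card ≤ k + s :=
    (Finset.card_le_card symmDiff_le_sup).trans ((Finset.card_union_le _ _).trans (by omega))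
  have hw : sparse (2 * k + s - 1) (x - μ) := (hx.sub hμ).mono (by omega)
  have herr : z - x = pinv A *ᵥ e - ((x - μ) - rowSpaceProj A *ᵥ (x - μ)) := by
    rw [hz, hy]; exact add_pinv_mulVec_sub_eq A x μ e
  have hon := norm2_restrict_pinv_mulVec_sub_le A hA (T := Tk) (by omega) hTcard.le hw e
  -- `k + s ≤ 2 * k + s - 1` fails only at `k = 0`, where `hks` forces `s = 0` and `S ∆ Tk = ∅`
  have hoff := norm2_restrict_pinv_mulVec_sub_le A hA (by omega) hU hw e
  rw [← herr] at hon hoff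
  have hmissed := norm2_restrict_compl_le (x := x) (S := S) (by simp [S]) (by omega) hTbig
  have hγw : 0 ≤ pripConst A (2 * k + s - 1) * norm2 (x - μ) :=
    mul_nonneg (pripConst_spec A _).1 (norm2_nonneg _)
  have hsqrt2 : √2 * √(1 + thetaConst A (k + s)) = √(2 + 2 * thetaConst A (k + s)) := by
    rw [← Real.sqrt_mul zero_le_two]; ring_nf
  calc norm2 (x - v) ≤ norm2 (restrict Tkᶜ x) + norm2 (restrict Tk (z - x)) := by
        rw [hv, sub_restrict]; exact norm2_sub_le _ _
    _ ≤ √2 * (pripConst A (2 * k + s - 1) * norm2 (x - μ) +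
          √(1 + thetaConst A (k + s)) * norm2 e) +
        (pripConst A (2 * k + s - 1) * norm2 (x - μ) + √(1 + thetaConst A k) * norm2 e) := by
      gcongr; exact hmissed.trans (by gcongr)
    _ ≤ _ := by
      rw [← hsqrt2]
      nlinarith [mul_le_mul_of_nonneg_right Real.one_lt_sqrt_two.le hγw]
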